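/- arXiv:1908.05538 — 10 statements merged into one kernel-verified Lean document; each statement's English description precedes it below -/
import Mathlib

section
/- Let M be a commutative binoid and e ∈ M an idempotent element, and let q : M → M/(e ∼ 1) be the quotient by the smallest monoid congruence identifying e with 1. Then for every idempotent z of M/(e ∼ 1) there exists an idempotent u of M with q(u) = z. -/
/-- The smallest monoid congruence identifying `a` with `1`; its quotient is `M/(a ∼ 1)`. -/
def aCon {M : Type*} [CommMonoidWithZero M] (a : M) : Con M :=
  conGen fun x y => x = a ∧ y = 1

/-!
Multiplication by an idempotent `e` already identifies `e` with `1`: the relation `x * e = y * e`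
is a congruence containing `(e, 1)`, so it is coarser than `M/(e ∼ 1)`. Hence if `x` represents an
idempotent of the quotient, then `x * x * e = x * e`, which makes `x * e` an idempotent of `M`; it
represents the same class as `x` because `e` becomes `1`.
-/

def IsIdempotentElem.mulCon {M : Type*} [CommMonoid M] {e : M} (he : IsIdempotentElem e) :
    Con M where
  r x y := x * e = y * e
  iseqv := ⟨fun _ => rfl, Eq.symm, Eq.trans⟩
  mul' {w x y z} hwx hyz :=
    calc w * y * e = w * e * (y * e) := by rw [mul_mul_mul_comm, he.eq]
      _ = x * e * (z * e) := by rw [hwx, hyz]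
      _ = x * z * e := by rw [mul_mul_mul_comm, he.eq]

theorem aCon_le_mulCon {M : Type*} [CommMonoidWithZero M] {e : M} (he : IsIdempotentElem e) :
    aCon e ≤ he.mulCon :=
  Con.conGen_le.mpr fun _ _ ⟨hx, hy⟩ => by
    change _ * e = _ * e
    rw [hx, hy, he.eq, one_mul]

theorem aCon_mk'_self {M : Type*} [CommMonoidWithZero M] (a : M) : (aCon a).mk' a = 1 :=
  (aCon a).eq.mpr <| ConGen.Rel.of _ _ ⟨rfl, rfl⟩

/-- Let `M` be a commutative binoid and `e ∈ M` an idempotent, and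
`q : M → M/(e ∼ 1)` the quotient by the smallest monoid congruence identifying `e` with `1`.
Then every idempotent of `M/(e ∼ 1)` lifts to an idempotent of `M`. -/
theorem idempotent_lift_of_quotient_idem_one {M : Type*} [CommMonoidWithZero M]
    (e : M) (he : e * e = e) :
    ∀ z : (aCon e).Quotient, z * z = z → ∃ u : M, u * u = u ∧ (aCon e).mk' u = z := by
  intro z hz
  obtain ⟨x, rfl⟩ := (aCon e).mk'_surjective z
  have hx : x * x * e = x * e := aCon_le_mulCon he <| (aCon e).eq.mp <| by rwa [← map_mul] at hz
  refine ⟨x * e, ?_, by rw [map_mul, aCon_mk'_self, mul_one]⟩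
  calc x * e * (x * e) = x * x * e := by rw [mul_mul_mul_comm, he]
    _ = x * e := hx
end

section
/- Let M be a commutative binoid and a ∈ M. The unique homomorphism M^sl → (M/(a))^sl induced by the Rees quotient map q₁ : M → M/(a) (the unique map making the square with the two booleanization maps commute) is an isomorphism if and only if a is nilpotent. -/
/-- The Rees congruence on a binoid by an ideal `I`:
`a ~ b` iff `a = b` or both `a, b ∈ I`. -/
def reesCon {M : Type*} [CommMonoidWithZero M] (I : Set M)
    (hI : ∀ a ∈ I, ∀ m : M, a * m ∈ I) : Con M where
  r a b := a = b ∨ (a ∈ I ∧ b ∈ I)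
  iseqv := by
    refine ⟨fun _ => Or.inl rfl, ?_, ?_⟩
    · rintro a b (rfl | h)
      · exact Or.inl rfl
      · exact Or.inr ⟨h.2, h.1⟩
    · rintro a b c (rfl | h1) (rfl | h2)
      · exact Or.inl rfl
      · exact Or.inr h2
      · exact Or.inr h1
      · exact Or.inr ⟨h1.1, h2.2⟩
  mul' := by
    rintro a b c d (rfl | h1) (rfl | h2)
    · exact Or.inl rfl
    · exact Or.inr ⟨by rw [mul_comm]; exact hI _ h2.1 a, by rw [mul_comm]; exact hI _ h2.2 a⟩
    · exact Or.inr ⟨hI _ h1.1 _, hI _ h1.2 _⟩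
    · exact Or.inr ⟨hI _ h1.1 _, hI _ h1.2 _⟩
/-- The principal ideal `xM = {x*m | m ∈ M}`. -/
def principalIdeal {M : Type*} [CommMonoidWithZero M] (x : M) : Set M := {a | ∃ m, a = x * m}

/-- The Rees congruence by the principal ideal `xM`; its quotient is `M/(x)`. -/
def reesConP {M : Type*} [CommMonoidWithZero M] (x : M) : Con M :=
  reesCon (principalIdeal x) (by rintro a ⟨m, rfl⟩ c; exact ⟨m * c, mul_assoc x m c⟩)
/-- The booleanization congruence: the smallest monoid congruence identifying every `m`
with `m * m`; its quotient is `M^sl`. -/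
def slCon (M : Type*) [Mul M] : Con M := conGen fun x y => y = x * x

/-!
If `a ^ n = 0`, then `a` and `0` have the same image in the idempotent monoid `M^sl`, so
`M → M^sl` factors through `M/(a)` and then through `(M/(a))^sl`; this is a left inverse of the
induced map, which is surjective anyway. Conversely, if the induced map is injective, `a` and `0`
are identified in `M^sl`. The congruence `x ~ y :⟺ ∀ z, (xz nilpotent ↔ yz nilpotent)` identifies
each `x` with `x²`, so it is coarser than the booleanization congruence, and `a ~ 0` says exactly
that `a` is nilpotent.
-/

section Booleanization

variable {M N : Type*} [Monoid M] [Monoid N]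

lemma slCon_mk'_mul_self (x : M) : (slCon M).mk' (x * x) = (slCon M).mk' x :=
  have h : slCon M x (x * x) := ConGen.Rel.of _ _ rfl
  ((Con.eq _).2 h).symm

lemma isIdempotentElem_slCon (z : (slCon M).Quotient) : IsIdempotentElem z :=
  Con.induction_on z fun x => slCon_mk'_mul_self x

lemma slCon_le_ker (g : M →* N) (hg : ∀ x, IsIdempotentElem (g x)) : slCon M ≤ Con.ker g :=
  Con.conGen_le.2 fun x _ h => by
    subst h
    exact ((Con.ker_rel g).2 (by rw [map_mul, hg x])).symm

lemma slCon_map_surjective {q : M →* N} (hq : Function.Surjective q)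
    {f : (slCon M).Quotient →* (slCon N).Quotient}
    (hf : ∀ m, f ((slCon M).mk' m) = (slCon N).mk' (q m)) : Function.Surjective f := by
  intro z
  obtain ⟨n, rfl⟩ := (slCon N).mk'_surjective z
  obtain ⟨m, rfl⟩ := hq n
  exact ⟨_, hf m⟩

end Booleanization

section Nilpotent

variable {M : Type*} [CommMonoidWithZero M]

lemma IsNilpotent.mul_left {y : M} (x : M) (hy : IsNilpotent y) : IsNilpotent (x * y) :=
  let ⟨n, hn⟩ := hy
  ⟨n, by rw [mul_pow, hn, mul_zero]⟩

lemma isNilpotent_mul_self_mul_iff (x z : M) :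
    IsNilpotent (x * x * z) ↔ IsNilpotent (x * z) := by
  constructor
  · intro h
    have hsq : (x * z) ^ 2 = z * (x * x * z) := by rw [sq]; ac_rfl
    exact IsNilpotent.of_pow (hsq ▸ h.mul_left z)
  · intro h
    rw [mul_assoc]
    exact h.mul_left x

def nilpotentCon (M : Type*) [CommMonoidWithZero M] : Con M where
  r x y := ∀ z, IsNilpotent (x * z) ↔ IsNilpotent (y * z)
  iseqv := ⟨fun _ _ => Iff.rfl, fun h z => (h z).symm, fun h h' z => (h z).trans (h' z)⟩
  mul' {x y u v} hxy huv z :=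
    calc IsNilpotent (x * u * z) ↔ IsNilpotent (y * (u * z)) := by rw [mul_assoc]; exact hxy _
      _ ↔ IsNilpotent (u * (y * z)) := by rw [mul_left_comm]
      _ ↔ IsNilpotent (v * (y * z)) := huv _
      _ ↔ IsNilpotent (y * v * z) := by rw [mul_left_comm, mul_assoc]

lemma slCon_le_nilpotentCon : slCon M ≤ nilpotentCon M :=
  Con.conGen_le.2 fun x _ h z => by
    subst h
    exact (isNilpotent_mul_self_mul_iff x z).symm

lemma slCon_mk'_eq_mk'_zero_iff {a : M} :
    (slCon M).mk' a = (slCon M).mk' 0 ↔ IsNilpotent a := by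
  constructor
  · intro h
    have := slCon_le_nilpotentCon ((Con.eq _).1 h) 1
    rw [mul_one, zero_mul] at this
    exact this.2 IsNilpotent.zero
  · rintro ⟨n, hn⟩
    rw [← (isIdempotentElem_slCon ((slCon M).mk' a)).pow_succ_eq n, ← map_pow, pow_succ, hn,
      zero_mul]

end Nilpotent

section Rees

variable {M : Type*} [CommMonoidWithZero M]

lemma reesConP_self_zero (a : M) : reesConP a a 0 :=
  Or.inr ⟨⟨1, (mul_one a).symm⟩, ⟨0, (mul_zero a).symm⟩⟩

lemma reesConP_le_ker_slCon_mk' {a : M} (ha : IsNilpotent a) :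
    reesConP a ≤ Con.ker (slCon M).mk' := by
  rintro x y (rfl | ⟨⟨s, rfl⟩, ⟨t, rfl⟩⟩)
  · rfl
  · have h0 := slCon_mk'_eq_mk'_zero_iff.2 ha
    rw [Con.ker_rel, map_mul, map_mul, h0, ← map_mul, ← map_mul, zero_mul, zero_mul]

lemma slCon_reesConP_map_injective {a : M} (ha : IsNilpotent a)
    {f : (slCon M).Quotient →* (slCon (reesConP a).Quotient).Quotient}
    (hf : ∀ m : M,
      f ((slCon M).mk' m) = (slCon (reesConP a).Quotient).mk' ((reesConP a).mk' m)) :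
    Function.Injective f := by
  let g₁ := (reesConP a).lift (slCon M).mk' (reesConP_le_ker_slCon_mk' ha)
  let g := (slCon _).lift g₁ (slCon_le_ker g₁ fun _ => isIdempotentElem_slCon _)
  have hgf : Function.LeftInverse g f := fun z =>
    Con.induction_on z fun m => by rw [← Con.coe_mk', hf]; rfl
  exact hgf.injective

end Rees

/-- The unique homomorphism `M^sl → (M/(a))^sl` induced by the Rees quotient
map `q₁ : M → M/(a)` (the unique map making the square with the two booleanization maps
commute) is an isomorphism if and only if `a` is nilpotent. -/
theorem sl_rees_iso_iff_nilpotent {M : Type*} [CommMonoidWithZero M] (a : M)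
    (f : (slCon M).Quotient →* (slCon (reesConP a).Quotient).Quotient)
    (hf : ∀ m : M,
      f ((slCon M).mk' m) = (slCon (reesConP a).Quotient).mk' ((reesConP a).mk' m)) :
    Function.Bijective f ↔ ∃ n : ℕ, 1 ≤ n ∧ a ^ n = 0 := by
  have hnil : (∃ n : ℕ, 1 ≤ n ∧ a ^ n = 0) ↔ IsNilpotent a :=
    ⟨fun ⟨n, _, hn⟩ => ⟨n, hn⟩,
      fun ⟨n, hn⟩ => ⟨n + 1, Nat.le_add_left 1 n, pow_eq_zero_of_le n.le_succ hn⟩⟩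
  rw [hnil]
  constructor
  · intro hbij
    apply slCon_mk'_eq_mk'_zero_iff.1
    apply hbij.1
    rw [hf, hf]
    exact congrArg _ ((Con.eq _).2 (reesConP_self_zero a))
  · intro ha
    exact ⟨slCon_reesConP_map_injective ha hf,
      slCon_map_surjective (reesConP a).mk'_surjective hf⟩
end

section
/- Let M be a commutative binoid and a ∈ M. The unique homomorphism M^sl → (M/(a ∼ 1))^sl induced by the canonical quotient map q₂ : M → M/(a ∼ 1) (the unique map making the square with the two booleanization maps commute) is an isomorphism if and only if a is invertible. -/
/-!
In a booleanization `a ∼ 1` holds exactly when `a` is a unit: a unit satisfies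
`a = a⁻¹a² ∼ a⁻¹a = 1`, and conversely "both units or both non-units" is a congruence coarser
than the booleanization one. Since `f` identifies the classes of `a` and `1`, injectivity of `f`
forces `a` to be a unit. If `a` is a unit, the projection `M → M^sl` factors through `M/(a ∼ 1)`
and, `M^sl` being idempotent, further through `(M/(a ∼ 1))^sl`; this is a left inverse of `f`,
which is surjective anyway.
-/

def unitCon (M : Type*) [CommMonoid M] : Con M where
  r x y := IsUnit x ↔ IsUnit y
  iseqv := ⟨fun _ => Iff.rfl, Iff.symm, Iff.trans⟩
  mul' {w x y z} hwx hyz := by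
    show IsUnit (w * y) ↔ IsUnit (x * z)
    rw [IsUnit.mul_iff, IsUnit.mul_iff]
    exact and_congr hwx hyz

section slCon

variable {M : Type*}

theorem slCon_rel_mul_self [Mul M] (m : M) : slCon M m (m * m) :=
  ConGen.Rel.of _ _ rfl

theorem slCon_mul_self [Mul M] (x : (slCon M).Quotient) : x * x = x :=
  Con.induction_on x fun m => ((slCon M).eq.2 (slCon_rel_mul_self m)).symm

theorem slCon_le_ker_s5 [MulOneClass M] {N : Type*} [MulOneClass N] (φ : M →* N)
    (hφ : ∀ y : N, y * y = y) : slCon M ≤ Con.ker φ :=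
  Con.conGen_le.2 fun x _ hxy => by
    show φ x = φ _
    rw [hxy, map_mul, hφ]

theorem slCon_le_unitCon [CommMonoid M] : slCon M ≤ unitCon M :=
  Con.conGen_le.2 fun x _ hxy => by
    show IsUnit x ↔ IsUnit _
    rw [hxy, IsUnit.mul_iff, and_self]

theorem slCon_one_iff_isUnit [CommMonoid M] {a : M} : slCon M a 1 ↔ IsUnit a := by
  refine ⟨fun h => (slCon_le_unitCon h).2 isUnit_one, fun ⟨u, hu⟩ => ?_⟩
  subst hu
  have h := (slCon M).mul ((slCon M).refl (↑u⁻¹ : M)) (slCon_rel_mul_self (u : M))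
  rw [← mul_assoc, Units.inv_mul, one_mul] at h
  exact (slCon M).symm h

end slCon

theorem aCon_rel {M : Type*} [CommMonoidWithZero M] (a : M) : aCon a a 1 :=
  ConGen.Rel.of _ _ ⟨rfl, rfl⟩

theorem aCon_le_ker_slCon_mk' {M : Type*} [CommMonoidWithZero M] {a : M} (ha : IsUnit a) :
    aCon a ≤ Con.ker (slCon M).mk' :=
  Con.conGen_le.2 fun _ _ ⟨hx, hy⟩ => by
    rw [hx, hy]
    exact (slCon M).eq.2 (slCon_one_iff_isUnit.2 ha)

/-- The unique homomorphism `M^sl → (M/(a ∼ 1))^sl` induced by the canonical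
quotient map `q₂ : M → M/(a ∼ 1)` (the unique map making the square with the two
booleanization maps commute) is an isomorphism if and only if `a` is invertible. -/
theorem sl_quot_one_iso_iff_isUnit {M : Type*} [CommMonoidWithZero M] (a : M)
    (f : (slCon M).Quotient →* (slCon (aCon a).Quotient).Quotient)
    (hf : ∀ m : M,
      f ((slCon M).mk' m) = (slCon (aCon a).Quotient).mk' ((aCon a).mk' m)) :
    Function.Bijective f ↔ IsUnit a := by
  have hsurj : Function.Surjective f := by
    have hcomp : f ∘ (slCon M).mk' = (slCon _).mk' ∘ (aCon a).mk' := funext hf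
    exact .of_comp (hcomp ▸ (slCon _).mk'_surjective.comp (aCon a).mk'_surjective)
  constructor
  · intro hbij
    have hfa : f ((slCon M).mk' a) = f ((slCon M).mk' 1) := by
      rw [hf, hf]
      exact congrArg _ ((aCon a).eq.2 (aCon_rel a))
    exact slCon_one_iff_isUnit.1 ((slCon M).eq.1 (hbij.injective hfa))
  · intro ha
    let q : (aCon a).Quotient →* (slCon M).Quotient :=
      Con.lift _ (slCon M).mk' (aCon_le_ker_slCon_mk' ha)
    let g := Con.lift _ q (slCon_le_ker_s5 q slCon_mul_self)
    have hgf : Function.LeftInverse g f := fun x => Con.induction_on x fun m => by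
      show g (f ((slCon M).mk' m)) = _
      rw [hf]
      rfl
    exact ⟨hgf.injective, hsurj⟩
end

section
/- Let M be an integral commutative binoid. Then: (i) if x ∈ M is pivotal and z ≠ 0, then x·z is pivotal (so Piv(M) is an ideal of the monoid M∖{0}); (ii) the set P(M) is closed under multiplication (it is a subsemigroup of M∖{0}), and 1 ∈ P(M) if and only if M is not separated, i.e. if and only if Piv(M) is nonempty. -/
/-- An element `x` of a binoid is pivotal if `x ≠ 0` and `M^x := {y | x*y = x} ≠ {1}`. -/
def IsPivotal {M : Type*} [CommMonoidWithZero M] (x : M) : Prop :=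
  x ≠ 0 ∧ ∃ y : M, y ≠ 1 ∧ x * y = x

/-- `P(M) = ⋃_{x pivotal} M^x`. -/
def pivUnion (M : Type*) [CommMonoidWithZero M] : Set M :=
  {y | ∃ x : M, IsPivotal x ∧ x * y = x}

/-- Let `M` be an integral commutative binoid. Then:
(i) if `x` is pivotal and `z ≠ 0` then `x * z` is pivotal (so `Piv(M)` is an ideal of
`M \ {0}`); (ii) `P(M)` is closed under multiplication, and `1 ∈ P(M)` iff `M` is not
separated, i.e. iff `Piv(M)` is nonempty. -/
theorem pivotal_ideal_and_pivUnion {M : Type*} [CommMonoidWithZero M]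
    (hint : ∀ x y : M, x * y = 0 → x = 0 ∨ y = 0) :
    (∀ x z : M, IsPivotal x → z ≠ 0 → IsPivotal (x * z)) ∧
    (∀ y₁ y₂ : M, y₁ ∈ pivUnion M → y₂ ∈ pivUnion M → y₁ * y₂ ∈ pivUnion M) ∧
    ((1 : M) ∈ pivUnion M ↔ ∃ x : M, IsPivotal x) := by
  have piv : ∀ x z : M, IsPivotal x → z ≠ 0 → IsPivotal (x * z) := by
    rintro x z ⟨hx0, y, hy1, hxy⟩ hz0
    refine ⟨fun h => ?_, y, hy1, ?_⟩
    · rcases hint x z h with h | h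
      · exact hx0 h
      · exact hz0 h
    · rw [mul_right_comm, hxy]
  refine ⟨piv, ?_, ?_⟩
  · rintro y₁ y₂ ⟨x₁, hx₁, h₁⟩ ⟨x₂, hx₂, h₂⟩
    refine ⟨x₁ * x₂, piv x₁ x₂ hx₁ hx₂.1, ?_⟩
    calc x₁ * x₂ * (y₁ * y₂) = (x₁ * y₁) * (x₂ * y₂) := mul_mul_mul_comm x₁ x₂ y₁ y₂
    _ = x₁ * x₂ := by rw [h₁, h₂]
  · constructor
    · rintro ⟨x, hx, -⟩; exact ⟨x, hx⟩
    · rintro ⟨x, hx⟩; exact ⟨x, hx, mul_one x⟩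
end

section
/- Let M be an integral commutative binoid, let a ∈ M be invertible, and let q : M → M' := M/(a ∼ 1) be the canonical quotient map. Then for every pivotal element x' of M' there exists a pivotal element x of M with q(x) = x', and for every y' ∈ P(M') there exists y ∈ P(M) with q(y) = y'. -/
/-- The quotient of a commutative binoid by a congruence is again a binoid,
with zero the class of `0`. -/
instance conQuotCMWZ {M : Type*} [CommMonoidWithZero M] (c : Con M) :
    CommMonoidWithZero c.Quotient where
  __ := (inferInstance : CommMonoid c.Quotient)
  zero := c.mk' 0
  zero_mul a := Con.induction_on a fun x => by
    show c.mk' 0 * c.mk' x = c.mk' 0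
    rw [← map_mul, zero_mul]
  mul_zero a := Con.induction_on a fun x => by
    show c.mk' x * c.mk' 0 = c.mk' 0
    rw [← map_mul, mul_zero]

/-!
Since `a` is a unit, two elements become equal in `M/(a ∼ 1)` exactly when they differ by a
factor `a ^ k` with `k ∈ ℤ`, and such factors map to `1`. Hence `q x * q y = q x` lifts to
`x * (y * a ^ (-k)) = x` with `q (y * a ^ (-k)) = q y`: every relation `x' * y' = x'` in the
quotient lifts along any preimage of `x'`, which transports pivotality and `P(-)` downwards.
-/

namespace aCon

variable {M : Type*} [CommMonoidWithZero M]

def powCon (a : M) : Con M where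
  r x y := ∃ m n : ℕ, x * a ^ m = y * a ^ n
  iseqv := by
    refine ⟨fun _ => ⟨0, 0, rfl⟩, fun ⟨m, n, h⟩ => ⟨n, m, h.symm⟩, ?_⟩
    rintro x y z ⟨m, n, hxy⟩ ⟨p, q, hyz⟩
    refine ⟨m + p, q + n, ?_⟩
    calc x * a ^ (m + p) = x * a ^ m * a ^ p := by rw [pow_add, mul_assoc]
      _ = y * a ^ p * a ^ n := by rw [hxy, mul_right_comm]
      _ = z * a ^ (q + n) := by rw [hyz, pow_add, mul_assoc]
  mul' := by
    rintro w x y z ⟨m, n, hwx⟩ ⟨p, q, hyz⟩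
    exact ⟨m + p, n + q, by rw [pow_add, pow_add, mul_mul_mul_comm w y, hwx, hyz,
      mul_mul_mul_comm]⟩

theorem mk'_self (a : M) : (aCon a).mk' a = 1 :=
  (Con.eq _).2 (ConGen.Rel.of a 1 ⟨rfl, rfl⟩)

theorem le_powCon (a : M) : aCon a ≤ powCon a :=
  (Con.conGen_le (c := powCon a)).2 fun _ _ ⟨hx, hy⟩ =>
    ⟨0, 1, by rw [hx, hy, pow_zero, pow_one, one_mul, mul_one]⟩

theorem mk'_units_zpow (u : Mˣ) (k : ℤ) : (aCon (u : M)).mk' ↑(u ^ k) = 1 := by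
  have hu : Units.map (aCon (u : M)).mk' u = 1 := Units.ext (mk'_self (u : M))
  rw [← Units.coe_map, map_zpow, hu, one_zpow, Units.val_one]

theorem units_iff {u : Mˣ} {x y : M} : aCon (u : M) x y ↔ ∃ k : ℤ, x = y * ↑(u ^ k) := by
  constructor
  · intro h
    obtain ⟨m, n, hmn⟩ := le_powCon _ h
    refine ⟨n - m, ?_⟩
    rw [zpow_sub, zpow_natCast, zpow_natCast, Units.val_mul, ← mul_assoc,
      Units.val_pow_eq_pow_val u n, ← hmn, ← Units.val_pow_eq_pow_val, Units.mul_inv_cancel_right]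
  · rintro ⟨k, rfl⟩
    refine (Con.eq _).1 (show (aCon (u : M)).mk' _ = (aCon (u : M)).mk' y from ?_)
    rw [map_mul, mk'_units_zpow, mul_one]

theorem exists_mul_eq_self_of_mk'_mul_eq {u : Mˣ} {x : M} {y' : (aCon (u : M)).Quotient}
    (h : (aCon (u : M)).mk' x * y' = (aCon (u : M)).mk' x) :
    ∃ y : M, x * y = x ∧ (aCon (u : M)).mk' y = y' := by
  obtain ⟨y, rfl⟩ := Con.mk'_surjective y'
  obtain ⟨k, hk⟩ := units_iff.1 ((Con.eq _).1 ((map_mul _ x y).trans h))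
  refine ⟨y * ↑(u ^ k)⁻¹, ?_, ?_⟩
  · rw [← mul_assoc, hk, Units.mul_inv_cancel_right]
  · rw [map_mul, ← zpow_neg, mk'_units_zpow, mul_one]

theorem isPivotal_of_isPivotal_mk' {u : Mˣ} {x : M} (hx : IsPivotal ((aCon (u : M)).mk' x)) :
    IsPivotal x := by
  obtain ⟨hx0, y', hy'1, hxy'⟩ := hx
  obtain ⟨y, hxy, rfl⟩ := exists_mul_eq_self_of_mk'_mul_eq hxy'
  refine ⟨fun h => hx0 (by rw [h]; rfl), y, fun h => hy'1 (by rw [h, map_one]), hxy⟩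

end aCon

theorem pivotal_lift_of_quotient_general {M : Type*} [CommMonoidWithZero M]
    (a : M) (ha : IsUnit a) :
    (∀ x' : (aCon a).Quotient, IsPivotal x' →
      ∃ x : M, IsPivotal x ∧ (aCon a).mk' x = x') ∧
    (∀ y' : (aCon a).Quotient, y' ∈ pivUnion ((aCon a).Quotient) →
      ∃ y : M, y ∈ pivUnion M ∧ (aCon a).mk' y = y') := by
  obtain ⟨u, rfl⟩ := ha
  have lift_pivotal (x' : (aCon (u : M)).Quotient) (hx' : IsPivotal x') :
      ∃ x : M, IsPivotal x ∧ (aCon (u : M)).mk' x = x' := by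
    obtain ⟨x, rfl⟩ := Con.mk'_surjective x'
    exact ⟨x, aCon.isPivotal_of_isPivotal_mk' hx', rfl⟩
  refine ⟨lift_pivotal, fun y' ⟨x', hx', hxy'⟩ => ?_⟩
  obtain ⟨x, hx, rfl⟩ := lift_pivotal x' hx'
  obtain ⟨y, hxy, rfl⟩ := aCon.exists_mul_eq_self_of_mk'_mul_eq hxy'
  exact ⟨y, ⟨x, hx, hxy⟩, rfl⟩

/-- Let `M` be an integral commutative binoid, `a ∈ M` invertible, and
`q : M → M' := M/(a ∼ 1)` the canonical quotient map. Then every pivotal element of `M'`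
lifts to a pivotal element of `M`, and every element of `P(M')` lifts to an element
of `P(M)`. -/
theorem pivotal_lift_of_quotient {M : Type*} [CommMonoidWithZero M]
    (hint : ∀ x y : M, x * y = 0 → x = 0 ∨ y = 0) (a : M) (ha : IsUnit a) :
    (∀ x' : (aCon a).Quotient, IsPivotal x' →
      ∃ x : M, IsPivotal x ∧ (aCon a).mk' x = x') ∧
    (∀ y' : (aCon a).Quotient, y' ∈ pivUnion ((aCon a).Quotient) →
      ∃ y : M, y ∈ pivUnion M ∧ (aCon a).mk' y = y') :=
  pivotal_lift_of_quotient_general a ha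
end

section
/- Let M be a commutative binoid and K a commutative ring. The map sending a binoid homomorphism p : M → K to the induced K-algebra homomorphism K[M] → K (determined on the quotient of the monoid algebra by sending the class of the basis element single(m, 1) to p(m)) is a well-defined bijection between the set MonoidWithZeroHom M K and the set of K-algebra homomorphisms K[M] → K. -/
/-- The binoid algebra `K[M]`: the quotient of the monoid algebra of `M` over `K` by the
ideal generated by the basis element `single (0 : M) (1 : K)` corresponding to the
absorbing element of `M`. -/
abbrev binoidAlgebra (K M : Type*) [CommRing K] [CommMonoidWithZero M] :=
  MonoidAlgebra K M ⧸ Ideal.span {MonoidAlgebra.of K M (0 : M)}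

/-! A binoid homomorphism `M → A` is a monoid homomorphism sending `0` to `0`. By the universal
property of the monoid algebra these are the `K`-algebra maps `K[M] → A` killing `of 0`, hence
the ones that factor through the quotient by the ideal it spans. -/

namespace binoidAlgebra

variable {K M A : Type*} [CommRing K] [CommMonoidWithZero M] [Semiring A] [Algebra K A]

variable (K M) in
noncomputable def of : M →*₀ binoidAlgebra K M :=
  { (Ideal.Quotient.mk _ : MonoidAlgebra K M →+* _).toMonoidHom.comp (MonoidAlgebra.of K M) with
    map_zero' := Ideal.Quotient.eq_zero_iff_mem.mpr (Ideal.subset_span rfl) }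

theorem algHom_ext {φ ψ : binoidAlgebra K M →ₐ[K] A} (h : ∀ m, φ (of K M m) = ψ (of K M m)) :
    φ = ψ :=
  Ideal.Quotient.algHom_ext K (MonoidAlgebra.algHom_ext h (Subsingleton.elim _ _))

theorem lift_eq_zero_of_mem_span_of_zero (f : M →*₀ A) {a : MonoidAlgebra K M}
    (ha : a ∈ Ideal.span {MonoidAlgebra.of K M 0}) : MonoidAlgebra.lift K A M f a = 0 := by
  obtain ⟨c, rfl⟩ := Ideal.mem_span_singleton'.mp ha
  simp

noncomputable def lift : (M →*₀ A) ≃ (binoidAlgebra K M →ₐ[K] A) where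
  toFun f := Ideal.Quotient.liftₐ _ (MonoidAlgebra.lift K A M f)
    fun _ => lift_eq_zero_of_mem_span_of_zero f
  invFun φ := (φ : binoidAlgebra K M →+* A).toMonoidWithZeroHom.comp (of K M)
  left_inv f := MonoidWithZeroHom.ext fun m => MonoidAlgebra.lift_of (f : M →* A) m
  right_inv _ := algHom_ext fun m => MonoidAlgebra.lift_of _ m

@[simp]
theorem lift_of (f : M →*₀ A) (m : M) : lift f (of K M m) = f m :=
  DFunLike.congr_fun (lift.symm_apply_apply f) m

end binoidAlgebra

/-- The map sending a binoid homomorphism `p : M → K` to the induced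
`K`-algebra homomorphism `K[M] → K` (determined by sending the class of the basis
element `single (m, 1)` to `p m`) is a well-defined bijection between
`MonoidWithZeroHom M K` and the set of `K`-algebra homomorphisms `K[M] → K`. -/
theorem binoidHom_equiv_algHom {K M : Type*} [CommRing K] [CommMonoidWithZero M] :
    ∃ Φ : MonoidWithZeroHom M K → (binoidAlgebra K M →ₐ[K] K),
      (∀ (p : MonoidWithZeroHom M K) (m : M),
        Φ p (Ideal.Quotient.mk _ (MonoidAlgebra.of K M m)) = p m) ∧
      Function.Bijective Φ :=
  ⟨binoidAlgebra.lift, binoidAlgebra.lift_of, binoidAlgebra.lift.bijective⟩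
end

section
/- Let M be a commutative binoid and K an integral domain. Precomposition with the canonical quotient map M → M_red is a bijection from MonoidWithZeroHom M_red K to MonoidWithZeroHom M K. -/
/-- The set (ideal) of nilpotent elements of a binoid. -/
def nilSet (M : Type*) [CommMonoidWithZero M] : Set M := {a | ∃ n : ℕ, 1 ≤ n ∧ a ^ n = 0}

/-- The Rees congruence by the ideal of nilpotent elements; its quotient is `M_red`. -/
def reesConNil (M : Type*) [CommMonoidWithZero M] : Con M :=
  reesCon (nilSet M) (by
    rintro a ⟨n, hn, h⟩ m
    exact ⟨n, hn, by rw [mul_pow, h, zero_mul]⟩)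
/-- The Rees quotient map `M → M_red`, as a binoid homomorphism. -/
def redHom (M : Type*) [CommMonoidWithZero M] : MonoidWithZeroHom M (reesConNil M).Quotient :=
  { (reesConNil M).mk' with map_zero' := rfl }



/-!
A reduced ring has no nonzero nilpotents, so every binoid homomorphism `M → K` kills the
nilpotent ideal and factors through the Rees quotient `M_red`; the factorization is unique
because the quotient map is surjective.
-/

theorem isNilpotent_of_mem_nilSet {M : Type*} [CommMonoidWithZero M] {a : M}
    (ha : a ∈ nilSet M) : IsNilpotent a := by
  obtain ⟨n, -, hn⟩ := ha
  exact ⟨n, hn⟩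

theorem reesCon_le_ker {M K F : Type*} [CommMonoidWithZero M] [MulZeroClass K] [FunLike F M K]
    [MulHomClass F M K] {I : Set M} (hI : ∀ a ∈ I, ∀ m : M, a * m ∈ I) (f : F)
    (hf : ∀ a ∈ I, f a = 0) : reesCon I hI ≤ Con.ker f := by
  rintro a b (rfl | ⟨ha, hb⟩)
  · exact (Con.ker f).refl a
  · exact (Con.ker_rel f).2 ((hf a ha).trans (hf b hb).symm)

theorem reesConNil_le_ker {M K F : Type*} [CommMonoidWithZero M] [MonoidWithZero K] [IsReduced K]
    [FunLike F M K] [MonoidWithZeroHomClass F M K] (f : F) : reesConNil M ≤ Con.ker f :=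
  reesCon_le_ker _ f fun _ ha => ((isNilpotent_of_mem_nilSet ha).map f).eq_zero

theorem redHom_surjective (M : Type*) [CommMonoidWithZero M] : Function.Surjective (redHom M) :=
  Con.mk'_surjective

def Con.liftWithZero {M K : Type*} [CommMonoidWithZero M] [MulZeroOneClass K] (c : Con M)
    (f : M →*₀ K) (h : c ≤ Con.ker f) : c.Quotient →*₀ K :=
  { c.lift (f : M →* K) h with map_zero' := f.map_zero }

/-- Let `M` be a commutative binoid and `K` an integral domain.
Precomposition with the canonical quotient map `M → M_red` is a bijection from
`MonoidWithZeroHom M_red K` to `MonoidWithZeroHom M K`. -/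
theorem red_precomp_bijective {M K : Type*} [CommMonoidWithZero M] [CommRing K] [IsDomain K] :
    Function.Bijective
      (fun φ : MonoidWithZeroHom (reesConNil M).Quotient K => φ.comp (redHom M)) :=
  ⟨fun _ _ h => (MonoidWithZeroHom.cancel_right (redHom_surjective M)).1 h,
    fun f => ⟨(reesConNil M).liftWithZero f (reesConNil_le_ker f), rfl⟩⟩
end

section
/- Let M be a finitely generated commutative binoid and K an integral domain. Then the map from the sigma type Σ_{r ∈ Adm(M)} MonoidWithZeroHom (M(r)) K to MonoidWithZeroHom M K, sending a pair (r, φ) to the composition of φ with the canonical quotient map M → M(r), is a bijection. Moreover, for every r ∈ Adm(M) the only idempotent elements of M(r) are 0 and 1. -/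
/-- `r` is a prime ideal of the binoid `Idem(M)` of idempotents of `M`:
`r` consists of idempotents, contains `0`, does not contain `1`, is an ideal of
`Idem(M)`, and is prime. `Adm(M)` is the collection of all such `r`. -/
def IsAdm {M : Type*} [CommMonoidWithZero M] (r : Set M) : Prop :=
  (∀ e ∈ r, e * e = e) ∧ (0 : M) ∈ r ∧ (1 : M) ∉ r ∧
    (∀ e ∈ r, ∀ f : M, f * f = f → e * f ∈ r) ∧
    (∀ e f : M, e * e = e → f * f = f → e * f ∈ r → e ∈ r ∨ f ∈ r)

/-- The smallest monoid congruence identifying every `e ∈ r` with `0` and every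
idempotent `e ∉ r` with `1`; its quotient is `M(r)`. -/
def admCon {M : Type*} [CommMonoidWithZero M] (r : Set M) : Con M :=
  conGen fun x y => (x ∈ r ∧ y = 0) ∨ (x * x = x ∧ x ∉ r ∧ y = 1)

/-- The quotient binoid `M(r)`. -/
abbrev admQuot {M : Type*} [CommMonoidWithZero M] (r : Set M) := (admCon r).Quotient

/-- The canonical quotient map `M → M(r)` as a binoid homomorphism. -/
def admHom {M : Type*} [CommMonoidWithZero M] (r : Set M) :
    MonoidWithZeroHom M (admQuot r) :=
  { (admCon r).mk' with map_zero' := rfl }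


/-!
A binoid homomorphism `φ : M → K` into a domain sends every idempotent to `0` or `1`, so the
idempotents it kills form a prime ideal `r` of `Idem(M)` and `φ` factors through `M(r)`;
conversely `r` is recovered from `ψ ∘ (M → M(r))` as the set of idempotents it kills.

For the idempotents of `M(r)`, the congruence defining `M(r)` is contained in the one relating
`a` and `b` when both are sent to `0`, or when `a * e = b * e` for an idempotent `e ∉ r`. An
idempotent class `[x]` thus gives `x * x * e = x * e`, so `x * e` is an idempotent of `M` with
image `[x]`, which is therefore `0` or `1`.
-/

section Quotient

variable {M : Type*} [CommMonoidWithZero M] {r : Set M}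

theorem admHom_surjective (r : Set M) : Function.Surjective (admHom r) :=
  (admCon r).mk'_surjective

theorem admHom_eq_zero_of_mem {e : M} (he : e ∈ r) : admHom r e = 0 :=
  (admCon r).eq.mpr <| ConGen.Rel.of _ _ <| Or.inl ⟨he, rfl⟩

theorem admHom_eq_one_of_notMem {e : M} (he : IsIdempotentElem e) (her : e ∉ r) :
    admHom r e = 1 :=
  (admCon r).eq.mpr <| ConGen.Rel.of _ _ <| Or.inr ⟨he, her, rfl⟩

variable {K : Type*} [MonoidWithZero K]

def admLift (φ : M →*₀ K) (h : admCon r ≤ Con.ker φ) : admQuot r →*₀ K :=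
  { (admCon r).lift (φ : M →* K) h with map_zero' := φ.map_zero }

theorem admLift_comp_admHom (φ : M →*₀ K) (h : admCon r ≤ Con.ker φ) :
    (admLift φ h).comp (admHom r) = φ :=
  rfl

end Quotient

section IdemKer

variable {M K : Type*} [CommMonoidWithZero M] [MonoidWithZero K]

def idemKer (φ : M →*₀ K) : Set M := {e | IsIdempotentElem e ∧ φ e = 0}

theorem isAdm_idemKer [NoZeroDivisors K] [Nontrivial K] (φ : M →*₀ K) :
    IsAdm (idemKer φ) := by
  refine ⟨fun e he => he.1, ⟨IsIdempotentElem.zero, φ.map_zero⟩, fun h => ?_, ?_, ?_⟩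
  · exact one_ne_zero (φ.map_one ▸ h.2)
  · rintro e ⟨he, he0⟩ f hf
    exact ⟨he.mul hf, by rw [map_mul, he0, zero_mul]⟩
  · rintro e f he hf ⟨-, hef⟩
    rw [map_mul] at hef
    exact (mul_eq_zero.mp hef).imp (⟨he, ·⟩) (⟨hf, ·⟩)

theorem admCon_idemKer_le_ker [IsLeftCancelMulZero K] (φ : M →*₀ K) :
    admCon (idemKer φ) ≤ Con.ker φ := by
  refine Con.conGen_le.2 ?_
  rintro x y (⟨⟨-, hx⟩, rfl⟩ | ⟨hx, hxr, rfl⟩)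
  · exact (Con.ker_rel _).2 (by rw [hx, map_zero])
  · refine (Con.ker_rel _).2 ?_
    rw [map_one]
    have hφx : φ x = 0 ∨ φ x = 1 := IsIdempotentElem.iff_eq_zero_or_one.mp (.map hx φ)
    exact hφx.resolve_left (hxr ⟨hx, ·⟩)

theorem idemKer_comp_admHom [Nontrivial K] {r : Set M} (hr : ∀ e ∈ r, IsIdempotentElem e)
    (ψ : admQuot r →*₀ K) : idemKer (ψ.comp (admHom r)) = r := by
  ext e
  refine ⟨fun ⟨he, he0⟩ => ?_, fun her => ⟨hr e her, ?_⟩⟩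
  · by_contra her
    simp [admHom_eq_one_of_notMem he her] at he0
  · simp [admHom_eq_zero_of_mem her]

theorem admHom_comp_bijective [IsLeftCancelMulZero K] [Nontrivial K] :
    Function.Bijective
      (fun p : Σ r : {r : Set M // IsAdm r}, MonoidWithZeroHom (admQuot r.val) K =>
        p.2.comp (admHom p.1.val)) := by
  refine ⟨?_, fun φ => ⟨⟨⟨_, isAdm_idemKer φ⟩, admLift φ (admCon_idemKer_le_ker φ)⟩,
    admLift_comp_admHom φ _⟩⟩
  rintro ⟨⟨r₁, h₁⟩, ψ₁⟩ ⟨⟨r₂, h₂⟩, ψ₂⟩ h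
  dsimp only at h
  obtain rfl : r₁ = r₂ := by
    rw [← idemKer_comp_admHom h₁.1 ψ₁, ← idemKer_comp_admHom h₂.1 ψ₂, h]
  obtain rfl := (MonoidWithZeroHom.cancel_right (admHom_surjective r₁)).mp h
  rfl

end IdemKer

section AdmQuotIdempotent

variable {M : Type*} [CommMonoidWithZero M] {r : Set M}

def idemCompl (hr : IsAdm r) : Submonoid M where
  carrier := {e | IsIdempotentElem e ∧ e ∉ r}
  one_mem' := ⟨IsIdempotentElem.one, hr.2.2.1⟩
  mul_mem' := fun ⟨he, her⟩ ⟨hf, hfr⟩ =>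
    ⟨he.mul hf, fun hef => (hr.2.2.2.2 _ _ he hf hef).elim her hfr⟩

/-- The elements sent to `0` in `M(r)`. -/
def admNull (hr : IsAdm r) : Set M := {a | ∃ e ∈ idemCompl hr, ∃ f ∈ r, a * e * f = a * e}

theorem mul_mem_admNull (hr : IsAdm r) (m : M) {a : M} (ha : a ∈ admNull hr) :
    m * a ∈ admNull hr := by
  obtain ⟨e, he, f, hf, h⟩ := ha
  exact ⟨e, he, f, hf, by rw [mul_assoc m, mul_assoc m, h]⟩

theorem mem_admNull_of_mul_eq (hr : IsAdm r) {a b e : M} (he : e ∈ idemCompl hr)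
    (hab : a * e = b * e) (hb : b ∈ admNull hr) : a ∈ admNull hr := by
  obtain ⟨e', he', f, hf, h⟩ := hb
  refine ⟨e * e', mul_mem he he', f, hf, ?_⟩
  calc a * (e * e') * f = e * (b * e' * f) := by rw [← mul_assoc, hab]; ac_rfl
    _ = a * (e * e') := by rw [h, ← mul_assoc, mul_comm e b, ← hab, mul_assoc]

def admConExplicit (hr : IsAdm r) : Con M where
  r a b := (a ∈ admNull hr ∧ b ∈ admNull hr) ∨ ∃ e ∈ idemCompl hr, a * e = b * e
  iseqv.refl a := .inr ⟨1, one_mem _, rfl⟩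
  iseqv.symm := by
    rintro a b (⟨ha, hb⟩ | ⟨e, he, h⟩)
    exacts [.inl ⟨hb, ha⟩, .inr ⟨e, he, h.symm⟩]
  iseqv.trans := by
    rintro a b c (⟨ha, hb⟩ | ⟨e, he, hab⟩) (⟨hb', hc⟩ | ⟨e', he', hbc⟩)
    · exact .inl ⟨ha, hc⟩
    · exact .inl ⟨ha, mem_admNull_of_mul_eq hr he' hbc.symm hb⟩
    · exact .inl ⟨mem_admNull_of_mul_eq hr he hab hb', hc⟩
    · refine .inr ⟨e * e', mul_mem he he', ?_⟩
      rw [← mul_assoc, hab, mul_right_comm, hbc, mul_right_comm, mul_assoc]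
  mul' := by
    rintro a b x y (⟨ha, hb⟩ | ⟨e, he, hab⟩) (⟨hx, hy⟩ | ⟨e', he', hxy⟩)
    · exact .inl ⟨mul_mem_admNull hr a hx, mul_mem_admNull hr b hy⟩
    · rw [mul_comm a, mul_comm b]
      exact .inl ⟨mul_mem_admNull hr x ha, mul_mem_admNull hr y hb⟩
    · exact .inl ⟨mul_mem_admNull hr a hx, mul_mem_admNull hr b hy⟩
    · refine .inr ⟨e * e', mul_mem he he', ?_⟩
      rw [mul_mul_mul_comm, hab, hxy, mul_mul_mul_comm]

theorem admCon_le_admConExplicit (hr : IsAdm r) : admCon r ≤ admConExplicit hr := by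
  refine Con.conGen_le.2 ?_
  rintro x y (⟨hx, rfl⟩ | ⟨hx, hxr, rfl⟩)
  · have hnull : ∀ {a}, a * x = a → a ∈ admNull hr := fun h =>
      ⟨1, one_mem _, x, hx, by rw [mul_one, h]⟩
    exact .inl ⟨hnull (hr.1 x hx), hnull (zero_mul x)⟩
  · exact .inr ⟨x, ⟨hx, hxr⟩, by rw [hx, one_mul]⟩

theorem admHom_eq_zero_of_mem_admNull (hr : IsAdm r) {a : M} (ha : a ∈ admNull hr) :
    admHom r a = 0 := by
  obtain ⟨e, ⟨he, her⟩, f, hf, h⟩ := ha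
  calc admHom r a = admHom r (a * e * f) := by
        rw [h, map_mul, admHom_eq_one_of_notMem he her, mul_one]
    _ = 0 := by rw [map_mul, admHom_eq_zero_of_mem hf, mul_zero]

theorem admQuot_eq_zero_or_one_of_isIdempotentElem (hr : IsAdm r) {z : admQuot r}
    (hz : IsIdempotentElem z) : z = 0 ∨ z = 1 := by
  obtain ⟨x, rfl⟩ := admHom_surjective r z
  have hx : admConExplicit hr (x * x) x :=
    admCon_le_admConExplicit hr <| (admCon r).eq.mp <| (map_mul (admHom r) x x).symm.trans hz
  rcases hx with ⟨-, hnull⟩ | ⟨e, ⟨he, her⟩, hxe⟩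
  · exact .inl (admHom_eq_zero_of_mem_admNull hr hnull)
  have hxe_idem : IsIdempotentElem (x * e) := by
    rw [IsIdempotentElem, mul_mul_mul_comm, he.eq, hxe]
  have hxe_image : admHom r (x * e) = admHom r x := by
    rw [map_mul, admHom_eq_one_of_notMem he her, mul_one]
  rw [← hxe_image]
  by_cases hxer : x * e ∈ r
  exacts [.inl (admHom_eq_zero_of_mem hxer), .inr (admHom_eq_one_of_notMem hxe_idem hxer)]

end AdmQuotIdempotent

theorem kspec_adm_decomposition_general {M K : Type*} [CommMonoidWithZero M] [CommRing K] [IsDomain K] :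
    Function.Bijective
      (fun p : Σ r : {r : Set M // IsAdm r}, MonoidWithZeroHom (admQuot r.val) K =>
        p.2.comp (admHom p.1.val)) ∧
    ∀ r : Set M, IsAdm r → ∀ z : admQuot r, z * z = z → z = 0 ∨ z = 1 :=
  ⟨admHom_comp_bijective, fun _ hr _ => admQuot_eq_zero_or_one_of_isIdempotentElem hr⟩

/-- Let `M` be a finitely generated commutative binoid and `K` an integral
domain. The map `Σ_{r ∈ Adm(M)} MonoidWithZeroHom (M(r)) K → MonoidWithZeroHom M K`, sending
`(r, φ)` to the composite of `φ` with the canonical quotient map `M → M(r)`, is a bijection.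
Moreover, for every `r ∈ Adm(M)` the only idempotents of `M(r)` are `0` and `1`. -/
theorem kspec_adm_decomposition {M K : Type*} [CommMonoidWithZero M] [CommRing K] [IsDomain K]
    (hfg : ∃ S : Finset M, Submonoid.closure (S : Set M) = ⊤) :
    Function.Bijective
      (fun p : Σ r : {r : Set M // IsAdm r}, MonoidWithZeroHom (admQuot r.val) K =>
        p.2.comp (admHom p.1.val)) ∧
    ∀ r : Set M, IsAdm r → ∀ z : admQuot r, z * z = z → z = 0 ∨ z = 1 :=
  kspec_adm_decomposition_general
end

section
/- Let N be a finitely generated commutative monoid such that for all x, y ∈ N, x·y = x implies y = 1. Then there exists a homomorphism δ : N → ℕ to the additive monoid of natural numbers (i.e. δ(x·y) = δ(x) + δ(y) and δ(1) = 0) such that for every x ∈ N, δ(x) = 0 if and only if x is invertible in N. -/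
/-!
Choose generators `sᵢ` of `N`, so that every element is a monomial `∏ sᵢ ^ aᵢ` with `a : ι → ℕ`.
It suffices to find weights `w : ι → ℕ`, positive on the non-unit generators, such that `w ⬝ a =
w ⬝ b` whenever the monomials of `a` and `b` are associated. Over `ℚ` this asks for a linear form
on `ℚ^ι ⧸ R`, where `R` is spanned by the differences `a - b` of such pairs, that is positive on
the classes of the non-unit basis vectors. By Gordan's alternative (a consequence of Farkas'
lemma) it exists unless `R` contains a vector `v ≥ 0` with `vᵢ > 0` for a non-unit `sᵢ`. Clearing
denominators turns `v` into `m = a - b ∈ ℕ^ι` with `mᵢ > 0` and `∏ s ^ b * ∏ s ^ m` associated to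
`∏ s ^ b`; then `x * y = x → y = 1` makes `∏ s ^ m`, hence `sᵢ`, a unit. Clearing the
denominators of the linear form gives the weights.
-/

open Finset

section Farkas

variable {K V : Type*} [Field K] [LinearOrder K] [IsStrictOrderedRing K]
  [AddCommGroup V] [Module K V]

theorem PointedCone.mem_hull_or_exists_dual (s : Finset V) (b : V) :
    b ∈ PointedCone.hull K (s : Set V) ∨
      ∃ f : V →ₗ[K] K, (∀ x ∈ s, 0 ≤ f x) ∧ f b < 0 := by
  classical
  rcases s.eq_empty_or_nonempty with rfl | ⟨x, hx⟩
  · by_cases hb : b = 0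
    · exact Or.inl (hb ▸ zero_mem _)
    · obtain ⟨f, hf⟩ := Module.Projective.exists_dual_eq_one K hb
      exact Or.inr ⟨-f, by simp, by simp [hf]⟩
  have hs : s = insert x (s.erase x) := (insert_erase hx).symm
  rcases mem_hull_or_exists_dual (s.erase x) b with hb | ⟨f, hf, hfb⟩
  · exact Or.inl (Submodule.span_mono (by simp) hb)
  by_cases hfx : 0 ≤ f x
  · refine Or.inr ⟨f, ?_, hfb⟩
    rw [hs]
    exact forall_mem_insert _ _ _ |>.2 ⟨hfx, hf⟩
  push Not at hfx
  -- `p` projects along `x` onto `ker f`, reducing the number of generators by one.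
  set p : V →ₗ[K] V := LinearMap.id - ((f x)⁻¹ • f).smulRight x
  have hp : ∀ y, p y = y - ((f x)⁻¹ * f y) • x := fun y => by simp [p]
  rcases mem_hull_or_exists_dual ((s.erase x).image p) (p b) with hpb | ⟨g, hg, hgb⟩
  · have hxs : x ∈ PointedCone.hull K (s : Set V) := PointedCone.subset_hull hx
    have himage : PointedCone.hull K ((s.erase x).image p : Set V) ≤
        PointedCone.hull K (s : Set V) := by
      refine Submodule.span_le.2 ?_
      simp only [coe_image, Set.image_subset_iff]
      intro y hy
      have hy' : y ∈ s := mem_of_mem_erase hy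
      rw [Set.mem_preimage, SetLike.mem_coe, hp, sub_eq_add_neg, ← neg_smul]
      refine add_mem (PointedCone.subset_hull hy') (PointedCone.smul_mem _ ?_ hxs)
      exact neg_nonneg.2 (mul_nonpos_of_nonpos_of_nonneg (inv_lt_zero.2 hfx).le (hf y hy))
    have hb : b = p b + ((f x)⁻¹ * f b) • x := by rw [hp]; abel
    left
    rw [hb]
    exact add_mem (himage hpb) (PointedCone.smul_mem _
      (mul_nonneg_of_nonpos_of_nonpos (inv_lt_zero.2 hfx).le hfb.le) hxs)
  · refine Or.inr ⟨g ∘ₗ p, ?_, hgb⟩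
    rw [hs]
    refine forall_mem_insert _ _ _ |>.2 ⟨?_, fun y hy => hg _ (mem_image_of_mem p hy)⟩
    simp [hp, hfx.ne]
termination_by s.card
decreasing_by
  all_goals classical first
    | exact card_erase_lt_of_mem hx
    | exact card_image_le.trans_lt (card_erase_lt_of_mem hx)

theorem PointedCone.exists_forall_pos_of_neg_notMem_hull (t : Finset V)
    (ht : ∀ v ∈ t, -v ∉ PointedCone.hull K (t : Set V)) :
    ∃ f : V →ₗ[K] K, ∀ v ∈ t, 0 < f v := by
  have h : ∀ v ∈ t, ∃ f : V →ₗ[K] K, (∀ x ∈ t, 0 ≤ f x) ∧ 0 < f v := fun v hv =>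
    ((mem_hull_or_exists_dual t (-v)).resolve_left (ht v hv)).imp
      fun f hf => ⟨hf.1, by simpa using hf.2⟩
  choose! F hF using h
  refine ⟨∑ u ∈ t, F u, fun v hv => ?_⟩
  rw [LinearMap.sum_apply]
  exact sum_pos' (fun u hu => (hF u hu).1 v hv) ⟨v, hv, (hF v hv).2⟩

end Farkas

theorem AddSubgroup.exists_nsmul_mem_of_mem_span_rat {V : Type*} [AddCommGroup V] [Module ℚ V]
    (C : AddSubgroup V) {v : V} (hv : v ∈ Submodule.span ℚ (C : Set V)) :
    ∃ n : ℕ, 0 < n ∧ n • v ∈ C := by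
  induction hv using Submodule.span_induction with
  | mem x hx => exact ⟨1, one_pos, by simpa using hx⟩
  | zero => exact ⟨1, one_pos, by simp⟩
  | add x y _ _ hx hy =>
    obtain ⟨m, hm, hmx⟩ := hx
    obtain ⟨n, hn, hny⟩ := hy
    refine ⟨m * n, mul_pos hm hn, ?_⟩
    rw [smul_add, mul_nsmul, mul_nsmul']
    exact C.add_mem (C.nsmul_mem hmx n) (C.nsmul_mem hny m)
  | smul q x _ hx =>
    obtain ⟨n, hn, hnx⟩ := hx
    refine ⟨q.den * n, mul_pos q.den_pos hn, ?_⟩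
    have h : (q.den * n) • (q • x) = q.num • (n • x) := by
      rw [← Nat.cast_smul_eq_nsmul ℚ, ← Nat.cast_smul_eq_nsmul ℚ n, ← Int.cast_smul_eq_zsmul ℚ,
        smul_smul, smul_smul, ← Rat.den_mul_eq_num, Nat.cast_mul]
      ring_nf
    rw [h]
    exact C.zsmul_mem hnx _

theorem Rat.exists_nat_mul_eq_natCast_of_nonneg {ι : Type*} [Fintype ι] (r : ι → ℚ)
    (hr : ∀ i, 0 ≤ r i) :
    ∃ M : ℕ, 0 < M ∧ ∃ w : ι → ℕ, ∀ i, (w i : ℚ) = M * r i := by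
  refine ⟨∏ i, (r i).den, prod_pos fun i _ => (r i).den_pos,
    fun i => (∏ j, (r j).den) / (r i).den * (r i).num.toNat, fun i => ?_⟩
  have hden : (r i).den ∣ ∏ j, (r j).den := dvd_prod_of_mem _ (mem_univ i)
  have hnum : ((r i).num.toNat : ℚ) = (r i).num := by
    exact_mod_cast Int.toNat_of_nonneg (Rat.num_nonneg.2 (hr i))
  rw [Nat.cast_mul, Nat.cast_div hden (by exact_mod_cast (r i).den_nz), hnum]
  conv_rhs => rw [← Rat.num_div_den (r i)]
  ring

section Grading

variable {N : Type*} [CommMonoid N]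

theorem isUnit_of_associated_mul_self (hsep : ∀ x y : N, x * y = x → y = 1) {x y : N}
    (h : Associated (x * y) x) : IsUnit y := by
  obtain ⟨u, hu⟩ := h
  exact IsUnit.of_mul_eq_one (u : N) (hsep x _ (by rw [← mul_assoc, hu]))

variable {ι : Type*} [Fintype ι] (s : ι → N)

theorem isUnit_of_associated_prod_pow (hsep : ∀ x y : N, x * y = x → y = 1) {a b : ι → ℕ}
    (hba : b ≤ a) (h : Associated (∏ j, s j ^ a j) (∏ j, s j ^ b j)) {i : ι} (hi : b i < a i) :
    IsUnit (s i) := by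
  obtain ⟨m, rfl⟩ : ∃ m, a = b + m := ⟨a - b, (add_tsub_cancel_of_le hba).symm⟩
  have hm : IsUnit (∏ j, s j ^ m j) :=
    isUnit_of_associated_mul_self hsep (by simpa [pow_add, prod_mul_distrib] using h)
  have hmi : m i ≠ 0 := by simp only [Pi.add_apply] at hi; omega
  exact (isUnit_pow_iff hmi).1 (IsUnit.prod_univ_iff.1 hm i)

def associatedRelations : AddSubgroup (ι → ℚ) where
  carrier := {v | ∃ a b : ι → ℕ, Associated (∏ i, s i ^ a i) (∏ i, s i ^ b i) ∧
    v = fun i => (a i : ℚ) - b i}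
  zero_mem' := ⟨0, 0, Associated.refl _, by ext; simp⟩
  add_mem' := by
    rintro _ _ ⟨a, b, hab, rfl⟩ ⟨a', b', hab', rfl⟩
    refine ⟨a + a', b + b', ?_, ?_⟩
    · simpa [pow_add, prod_mul_distrib] using hab.mul_mul hab'
    · ext i; simp only [Pi.add_apply, Nat.cast_add]; ring
  neg_mem' := by
    rintro _ ⟨a, b, hab, rfl⟩
    exact ⟨b, a, hab.symm, by ext i; simp⟩

theorem isUnit_of_mem_span_associatedRelations (hsep : ∀ x y : N, x * y = x → y = 1)
    {v : ι → ℚ} (hv : v ∈ Submodule.span ℚ (associatedRelations s : Set (ι → ℚ)))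
    (hv0 : 0 ≤ v) {i : ι} (hi : 0 < v i) : IsUnit (s i) := by
  obtain ⟨n, hn, a, b, hab, hnv⟩ := (associatedRelations s).exists_nsmul_mem_of_mem_span_rat hv
  have hdiff : ∀ j, (a j : ℚ) - b j = n * v j := fun j => by
    simpa using (congrFun hnv j).symm
  refine isUnit_of_associated_prod_pow s hsep (fun j => ?_) hab ?_
  · have : (0 : ℚ) ≤ a j - b j := hdiff j ▸ mul_nonneg n.cast_nonneg (hv0 j)
    exact_mod_cast sub_nonneg.1 this
  · have : (0 : ℚ) < a i - b i := hdiff i ▸ mul_pos (Nat.cast_pos.2 hn) hi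
    exact_mod_cast sub_pos.1 this

def associatedRelationSpan : Submodule ℚ (ι → ℚ) :=
  Submodule.span ℚ (associatedRelations s : Set (ι → ℚ))

theorem isUnit_of_neg_mem_hull [DecidableEq ι] (hsep : ∀ x y : N, x * y = x → y = 1) {i : ι}
    (h : -(associatedRelationSpan s).mkQ (Pi.single i 1) ∈
      PointedCone.hull ℚ (Set.range fun j => (associatedRelationSpan s).mkQ (Pi.single j 1))) :
    IsUnit (s i) := by
  set R := associatedRelationSpan s
  have hsingle : ∀ j, (0 : ι → ℚ) ≤ Pi.single j 1 := fun j => Pi.single_nonneg.2 zero_le_one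
  have hrange : (Set.range fun j => R.mkQ (Pi.single j 1)) =
      R.mkQ.restrictScalars {c : ℚ // 0 ≤ c} '' Set.range fun j => Pi.single j 1 :=
    Set.range_comp _ _
  rw [hrange, PointedCone.hull, Submodule.span_image] at h
  obtain ⟨q, hq, hqi⟩ := h
  have hq0 : 0 ≤ q := (Submodule.span_le (p := PointedCone.positive ℚ (ι → ℚ)).2
    (by rintro _ ⟨j, rfl⟩; exact hsingle j)) hq
  have hmem : q + Pi.single i 1 ∈ R := by
    rw [← Submodule.Quotient.mk_eq_zero, Submodule.Quotient.mk_add]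
    exact add_eq_zero_iff_eq_neg.2 hqi
  refine isUnit_of_mem_span_associatedRelations s hsep hmem (add_nonneg hq0 (hsingle i)) ?_
  simpa using add_pos_of_nonneg_of_pos (hq0 i) one_pos

theorem exists_weight_eq_of_associated (hsep : ∀ x y : N, x * y = x → y = 1) :
    ∃ w : ι → ℕ, (∀ i, w i = 0 → IsUnit (s i)) ∧
      ∀ a b : ι → ℕ, Associated (∏ i, s i ^ a i) (∏ i, s i ^ b i) →
        ∑ i, w i * a i = ∑ i, w i * b i := by
  classical
  set R := associatedRelationSpan s
  obtain ⟨f, hf⟩ := PointedCone.exists_forall_pos_of_neg_notMem_hull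
    ((univ.filter fun i => ¬IsUnit (s i)).image fun i => R.mkQ (Pi.single i 1)) (by
      simp only [mem_image, mem_filter, mem_univ, true_and]
      rintro _ ⟨i, hi, rfl⟩ h
      refine hi (isUnit_of_neg_mem_hull s hsep (Submodule.span_mono ?_ h))
      rw [coe_image]
      exact Set.image_subset_iff.2 fun j _ => ⟨j, rfl⟩)
  set g := f ∘ₗ R.mkQ
  have hg_rel : ∀ v ∈ associatedRelations s, g v = 0 := fun v hv => by
    simp [g, (Submodule.Quotient.mk_eq_zero R).2 (Submodule.subset_span hv)]
  have hg_pos : ∀ i, ¬IsUnit (s i) → 0 < g (Pi.single i 1) := fun i hi =>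
    hf _ (mem_image_of_mem _ (by simp [hi]))
  have hg_nonneg : ∀ i, 0 ≤ g (Pi.single i 1) := by
    intro i
    by_cases hi : IsUnit (s i)
    · refine (hg_rel _ ⟨Pi.single i 1, 0, ?_, ?_⟩).ge
      · simpa [Pi.single_apply] using associated_one_iff_isUnit.2 hi
      · ext j; by_cases hj : j = i <;> simp [hj]
    · exact (hg_pos i hi).le
  obtain ⟨M, hM, w, hw⟩ := Rat.exists_nat_mul_eq_natCast_of_nonneg _ hg_nonneg
  have hgw : ∀ a : ι → ℕ, ((∑ i, w i * a i : ℕ) : ℚ) = M * g fun i => (a i : ℚ) := by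
    intro a
    rw [LinearMap.pi_apply_eq_sum_univ g, mul_sum]
    push_cast
    refine sum_congr rfl fun i _ => ?_
    have hsingle : (fun j => if i = j then (1 : ℚ) else 0) = Pi.single i 1 := by
      ext j; simp [Pi.single_apply, eq_comm]
    rw [hw, hsingle, smul_eq_mul]
    ring
  refine ⟨w, fun i hwi => ?_, fun a b hab => ?_⟩
  · by_contra hi
    have := hw i
    rw [hwi, Nat.cast_zero] at this
    exact (mul_pos (Nat.cast_pos.2 hM) (hg_pos i hi)).ne this
  · have hab' := hg_rel _ ⟨a, b, hab, rfl⟩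
    rw [show (fun i => (a i : ℚ) - b i) = (fun i => (a i : ℚ)) - fun i => (b i : ℚ) from rfl,
      map_sub, sub_eq_zero] at hab'
    exact_mod_cast (hgw a).trans (hab' ▸ (hgw b).symm)

end Grading

/-- Let `N` be a finitely generated commutative monoid such that
`x * y = x` implies `y = 1`. Then there is a grading `δ : N → ℕ` (additive, sending `1` to
`0`) such that `δ x = 0` iff `x` is invertible. -/
theorem exists_grading {N : Type*} [CommMonoid N]
    (hfg : ∃ S : Finset N, Submonoid.closure (S : Set N) = ⊤)
    (hsep : ∀ x y : N, x * y = x → y = 1) :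
    ∃ δ : N → ℕ, (∀ x y : N, δ (x * y) = δ x + δ y) ∧ δ 1 = 0 ∧
      ∀ x : N, δ x = 0 ↔ IsUnit x := by
  obtain ⟨S, hS⟩ := hfg
  have hexp : ∀ x : N, ∃ a : S → ℕ, x = ∏ i : S, (i : N) ^ a i := fun x =>
    Submonoid.mem_closure_finset'.1 (hS ▸ Submonoid.mem_top x)
  choose e he using hexp
  obtain ⟨w, hw_pos, hw_rel⟩ := exists_weight_eq_of_associated (fun i : S => (i : N)) hsep
  refine ⟨fun x => ∑ i, w i * e x i, fun x y => ?_, ?_, fun x => ⟨fun hx => ?_, fun hx => ?_⟩⟩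
  · simpa [mul_add, sum_add_distrib] using hw_rel (e (x * y)) (e x + e y)
      (.of_eq (by simp only [Pi.add_apply, pow_add, prod_mul_distrib, ← he]))
  · simpa using hw_rel (e 1) 0 (.of_eq (by rw [← he]; simp))
  · rw [he x, IsUnit.prod_univ_iff]
    intro i
    rcases Nat.mul_eq_zero.1 ((sum_eq_zero_iff.1 hx) i (mem_univ i)) with hwi | hei
    · exact (hw_pos i hwi).pow _
    · simp [hei]
  · simpa using hw_rel (e x) 0 (by rw [← he]; simpa using associated_one_iff_isUnit.2 hx)
end

section
/- Let G be a finitely generated abelian group, let X be the space of group homomorphisms G → ℝˣ equipped with the topology of pointwise convergence (ℝˣ carrying the subspace topology from ℝ), and let D ⊆ X be the subspace of homomorphisms f such that (f g)² = 1 for every g ∈ G. Then the inclusion D ↪ X is a homotopy equivalence, and D is a finite discrete space. -/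
/-- The topology of pointwise convergence on `Hom(G, ℝˣ)`, with `ℝˣ` carrying the subspace
topology from `ℝ`. -/
instance groupHomRealUnitsTop {G : Type*} [CommGroup G] :
    TopologicalSpace (G →* ℝˣ) :=
  TopologicalSpace.induced (fun f => fun g => ((f g : ℝ))) Pi.topologicalSpace

/-!
Composing a homomorphism `f : G → ℝˣ` with the endomorphism `x ↦ sign x · |x| ^ t` of `ℝˣ`
deforms `f` (at `t = 1`) into its sign `G → {±1}` (at `t = 0`), continuously in `t` and `f`,
while fixing the homomorphisms with values in `{±1}`. So the space of all homomorphisms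
deformation retracts onto `D`. Since a homomorphism is determined by its values on finitely
many generators, `D` is finite, and being Hausdorff it is discrete.
-/

open ContinuousMap

theorem MonoidHom.finite_of_forall_mem {G M : Type*} [Group G] [hG : Group.FG G] [Monoid M]
    {T : Set M} (hT : T.Finite) : Finite {f : G →* M // ∀ g, f g ∈ T} := by
  obtain ⟨S, hS⟩ := hG.out
  have := hT.to_subtype
  refine Finite.of_injective
    (fun (f : {f : G →* M // ∀ g, f g ∈ T}) (s : S) => (⟨f.1 s, f.2 s⟩ : T)) fun f f' h => ?_
  exact Subtype.ext <| MonoidHom.eq_of_eqOn_dense hS fun s hs =>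
    congrArg Subtype.val (congrFun h ⟨s, hs⟩)

theorem Units.finite_setOf_sq_eq_one {R : Type*} [CommRing R] [IsDomain R] :
    {x : Rˣ | x ^ 2 = 1}.Finite :=
  (Set.finite_coe_iff.1 (inferInstanceAs (Finite (rootsOfUnity 2 R)))).subset
    fun x hx => (mem_rootsOfUnity 2 x).2 hx

def ContinuousMap.HomotopyEquiv.subtypeOfRetraction {X : Type*} [TopologicalSpace X] {p : X → Prop}
    (r : C(X, Subtype p)) (hr : ∀ a : Subtype p, r a = a)
    (H : Homotopy ((⟨Subtype.val, continuous_subtype_val⟩ : C(Subtype p, X)).comp r)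
      (ContinuousMap.id X)) :
    Subtype p ≃ₕ X where
  toFun := ⟨Subtype.val, continuous_subtype_val⟩
  invFun := r
  left_inv := by
    rw [show r.comp ⟨Subtype.val, continuous_subtype_val⟩ = ContinuousMap.id _ from ext hr]
  right_inv := ⟨H⟩

noncomputable def signedRpowHom (t : ℝ) : ℝˣ →* ℝˣ where
  toFun x := Units.mk0 (x * |(x : ℝ)| ^ (t - 1))
    (mul_ne_zero x.ne_zero (Real.rpow_pos_of_pos (abs_pos.2 x.ne_zero) _).ne')
  map_one' := by ext; simp
  map_mul' x y := by
    ext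
    simp only [Units.val_mk0, Units.val_mul, abs_mul,
      Real.mul_rpow (abs_nonneg (x : ℝ)) (abs_nonneg (y : ℝ))]
    ring

theorem signedRpowHom_apply_coe (t : ℝ) (x : ℝˣ) :
    (signedRpowHom t x : ℝ) = x * |(x : ℝ)| ^ (t - 1) := rfl

theorem signedRpowHom_one : signedRpowHom 1 = MonoidHom.id ℝˣ := by
  ext x
  simp [signedRpowHom_apply_coe]

theorem signedRpowHom_apply_of_sq_eq_one (t : ℝ) {x : ℝˣ} (hx : x ^ 2 = 1) :
    signedRpowHom t x = x := by
  have habs : |(x : ℝ)| = 1 := (abs_pow_eq_one _ two_ne_zero).1 <| by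
    rw [← Units.val_pow_eq_pow_val, hx, Units.val_one, abs_one]
  ext
  simp [signedRpowHom_apply_coe, habs]

theorem sq_signedRpowHom_zero (x : ℝˣ) : signedRpowHom 0 x ^ 2 = 1 := by
  ext
  rw [Units.val_pow_eq_pow_val, signedRpowHom_apply_coe, zero_sub, Real.rpow_neg_one, mul_pow,
    inv_pow, sq_abs, Units.val_one]
  exact mul_inv_cancel₀ (pow_ne_zero _ x.ne_zero)

theorem continuous_signedRpowHom :
    Continuous fun p : ℝ × ℝˣ => signedRpowHom p.1 p.2 := by
  refine Units.isEmbedding_val₀.continuous_iff.2 ?_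
  have hval : Continuous fun p : ℝ × ℝˣ => (p.2 : ℝ) := Units.continuous_val.comp continuous_snd
  exact hval.mul ((continuous_abs.comp hval).rpow (continuous_fst.sub continuous_const)
    fun p => Or.inl (abs_ne_zero.2 p.2.ne_zero))

section

variable {G : Type*} [CommGroup G]

theorem continuous_monoidHom_realUnits_iff {Y : Type*} [TopologicalSpace Y] {F : Y → G →* ℝˣ} :
    Continuous F ↔ ∀ g, Continuous fun y => F y g := by
  simp only [Units.isEmbedding_val₀.continuous_iff]
  exact continuous_induced_rng.trans continuous_pi_iff

theorem continuous_monoidHom_realUnits_apply (g : G) : Continuous fun f : G →* ℝˣ => f g :=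
  continuous_monoidHom_realUnits_iff.1 continuous_id g

instance : T2Space (G →* ℝˣ) :=
  T2Space.of_injective_continuous (f := fun f g => (f g : ℝ))
    (fun _ _ h => MonoidHom.ext fun g => Units.ext (congrFun h g)) continuous_induced_dom

theorem continuous_signedRpowHom_comp :
    Continuous fun q : ℝ × (G →* ℝˣ) => (signedRpowHom q.1).comp q.2 :=
  continuous_monoidHom_realUnits_iff.2 fun g => continuous_signedRpowHom.comp
    (continuous_fst.prodMk ((continuous_monoidHom_realUnits_apply g).comp continuous_snd))

noncomputable def signRetraction : C(G →* ℝˣ, {f : G →* ℝˣ // ∀ g, f g ^ 2 = 1}) where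
  toFun f := ⟨(signedRpowHom 0).comp f, fun g => sq_signedRpowHom_zero (f g)⟩
  continuous_toFun := (continuous_signedRpowHom_comp.comp
    (continuous_const.prodMk continuous_id)).subtype_mk _

noncomputable def signDeformation :
    Homotopy ((⟨Subtype.val, continuous_subtype_val⟩ : C(_, G →* ℝˣ)).comp signRetraction)
      (ContinuousMap.id (G →* ℝˣ)) where
  toFun q := (signedRpowHom q.1).comp q.2
  continuous_toFun := continuous_signedRpowHom_comp.comp
    ((continuous_subtype_val.comp continuous_fst).prodMk continuous_snd)
  map_zero_left _ := rfl
  map_one_left f := by simp [signedRpowHom_one]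

theorem signRetraction_apply_val (p : {f : G →* ℝˣ // ∀ g, f g ^ 2 = 1}) :
    signRetraction p.1 = p :=
  Subtype.ext <| MonoidHom.ext fun g => signedRpowHom_apply_of_sq_eq_one 0 (p.2 g)

end

/-- Let `G` be a finitely generated abelian group, `X` the space of group
homomorphisms `G → ℝˣ` with the pointwise-convergence topology, and `D ⊆ X` the subspace of
homomorphisms `f` with `(f g)² = 1` for all `g`. Then the inclusion `D ↪ X` is a homotopy
equivalence, and `D` is a finite discrete space. -/
theorem real_spec_grouplike {G : Type*} [CommGroup G]
    (hfg : ∃ S : Finset G, Subgroup.closure (S : Set G) = ⊤) :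
    (∃ h : ContinuousMap.HomotopyEquiv
        {f : G →* ℝˣ // ∀ g : G, (f g) ^ 2 = 1} (G →* ℝˣ),
      ∀ p : {f : G →* ℝˣ // ∀ g : G, (f g) ^ 2 = 1}, h.toFun p = p.val) ∧
    Finite {f : G →* ℝˣ // ∀ g : G, (f g) ^ 2 = 1} ∧
    DiscreteTopology {f : G →* ℝˣ // ∀ g : G, (f g) ^ 2 = 1} := by
  have : Group.FG G := ⟨hfg⟩
  have hfin : Finite {f : G →* ℝˣ // ∀ g : G, (f g) ^ 2 = 1} :=
    MonoidHom.finite_of_forall_mem Units.finite_setOf_sq_eq_one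
  exact ⟨⟨HomotopyEquiv.subtypeOfRetraction signRetraction signRetraction_apply_val
    signDeformation, fun _ => rfl⟩, hfin, inferInstance⟩
end
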